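/- arXiv:2604.21143 — 4 statements merged into one kernel-verified Lean document; each statement's English description precedes it below -/
import Mathlib

section
/- Let d ≥ 1 be an integer, ε ∈ (0,1), and 1 ≤ i, j ≤ d. Then (ε^d / κ_ε) · Σ_{z ∈ εℤ^d \ {0}, |z| ≤ 1} |z|^{-(d+2)} z_i z_j = δ_{ij} / d, where δ_{ij} is the Kronecker delta and z_i denotes the i-th coordinate of z. -/
/-- The rescaled lattice point `ε·w ∈ εℤ^d ⊂ ℝ^d` (with the Euclidean norm). -/
noncomputable def pt (d : ℕ) (ε : ℝ) (w : Fin d → ℤ) : EuclideanSpace ℝ (Fin d) :=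
  (WithLp.equiv 2 (Fin d → ℝ)).symm fun i => ε * (w i : ℝ)

open scoped Classical in
/-- The normalizing constant `κ_ε := ε^d · Σ_{z ∈ εℤ^d \ {0}, |z| ≤ 1} |z|^{-d}`. -/
noncomputable def kappa (d : ℕ) (ε : ℝ) : ℝ :=
  ε ^ d * ∑' w : Fin d → ℤ,
    (if w ≠ 0 ∧ ‖pt d ε w‖ ≤ 1 then (‖pt d ε w‖ ^ d)⁻¹ else 0)

/-!
The weight `|z|^{-(d+2)}` on the punctured unit ball of `εℤ^d` is invariant under signed
permutations of the coordinates. Flipping the sign of `z_i` makes the off-diagonal summand odd,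
so it sums to zero. Permuting coordinates shows that the `d` diagonal sums agree, and their total
is `Σ |z|^{-(d+2)} |z|^2 = κ_ε / ε^d`.
-/

theorem tsum_eq_zero_of_comp_eq_neg {β α : Type*} [AddCommGroup α] [TopologicalSpace α]
    [IsTopologicalAddGroup α] [T2Space α] [IsAddTorsionFree α] {f : β → α} (e : β ≃ β)
    (hf : ∀ b, f (e b) = -f b) : ∑' b, f b = 0 := by
  refine self_eq_neg.mp ?_
  calc ∑' b, f b = ∑' b, f (e b) := (e.tsum_eq f).symm
    _ = -∑' b, f b := by simp_rw [hf, tsum_neg]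

section LatticeMoments

variable {d : ℕ} (m : (Fin d → ℤ) → ℝ) (c : ℝ)

theorem tsum_mul_apply_mul_apply_eq_zero {i j : Fin d} (hij : i ≠ j)
    (hm : ∀ w, m (Function.update w i (-w i)) = m w) :
    ∑' w, m w * (c * w i) * (c * w j) = 0 := by
  have hflip : Function.Involutive fun w : Fin d → ℤ => Function.update w i (-w i) :=
    fun w => by simp
  refine tsum_eq_zero_of_comp_eq_neg (hflip.toPerm _) fun w => ?_
  simp only [Function.Involutive.coe_toPerm, hm, Function.update_self,
    Function.update_of_ne hij.symm, Int.cast_neg]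
  ring

theorem tsum_mul_apply_mul_self_eq_of_swap (hm : ∀ k l w, m (w ∘ Equiv.swap k l) = m w)
    (k l : Fin d) :
    ∑' w, m w * (c * w k) * (c * w k) = ∑' w, m w * (c * w l) * (c * w l) := by
  have hswap : Function.Involutive fun w : Fin d → ℤ => w ∘ Equiv.swap k l :=
    fun w => by ext; simp
  rw [← (hswap.toPerm _).tsum_eq]
  simp [hm]

theorem tsum_mul_apply_mul_self_eq_div (hm_fin : m.HasFiniteSupport)
    (hm : ∀ k l w, m (w ∘ Equiv.swap k l) = m w) (k : Fin d) :
    ∑' w, m w * (c * w k) * (c * w k) = (∑' w, m w * ∑ l, (c * w l) ^ 2) / d := by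
  have hd : (d : ℝ) ≠ 0 := Nat.cast_ne_zero.mpr k.pos.ne'
  have hsummable : ∀ l, Summable fun w => m w * (c * w l) * (c * w l) := fun l =>
    summable_of_hasFiniteSupport (by fun_prop)
  rw [eq_div_iff hd]
  calc (∑' w, m w * (c * w k) * (c * w k)) * d
      = ∑ l : Fin d, ∑' w, m w * (c * w l) * (c * w l) := by
        rw [Finset.sum_congr rfl fun l _ => tsum_mul_apply_mul_self_eq_of_swap m c hm l k]
        simp [mul_comm]
    _ = ∑' w, m w * ∑ l, (c * w l) ^ 2 := by
        rw [← Summable.tsum_finsetSum fun l _ => hsummable l]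
        simp_rw [Finset.mul_sum, sq, mul_assoc]

end LatticeMoments

section RescaledLattice

variable {d : ℕ} {ε : ℝ}

@[simp]
theorem pt_apply (w : Fin d → ℤ) (k : Fin d) : pt d ε w k = ε * w k := rfl

theorem pt_eq_zero_iff (hε : ε ≠ 0) {w : Fin d → ℤ} : pt d ε w = 0 ↔ w = 0 := by
  constructor
  · intro h
    ext k
    simpa [hε] using congr($h k)
  · rintro rfl
    ext k
    simp

theorem norm_pt_sq (w : Fin d → ℤ) : ‖pt d ε w‖ ^ 2 = ∑ k, (ε * w k) ^ 2 := by
  simp [EuclideanSpace.real_norm_sq_eq]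

theorem norm_pt_single (i : Fin d) : ‖pt d ε (Pi.single i 1)‖ = |ε| := by
  have : pt d ε (Pi.single i 1) = EuclideanSpace.single i ε := by
    ext k
    rcases eq_or_ne k i with rfl | hk <;> simp [*]
  rw [this, PiLp.norm_single, Real.norm_eq_abs]

theorem finite_setOf_norm_pt_le (hε : 0 < ε) (R : ℝ) :
    {w : Fin d → ℤ | ‖pt d ε w‖ ≤ R}.Finite := by
  refine (Fintype.piFinset fun _ => Finset.Icc (-⌈R / ε⌉) ⌈R / ε⌉).finite_toSet.subset
    fun w hw => ?_
  simp only [Finset.mem_coe, Fintype.mem_piFinset, Finset.mem_Icc]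
  intro k
  rw [← abs_le, ← Int.cast_le (R := ℝ), Int.cast_abs]
  have hk : |ε * w k| ≤ R := by simpa using (PiLp.norm_apply_le (pt d ε w) k).trans hw
  rw [abs_mul, abs_of_pos hε, ← le_div_iff₀' hε] at hk
  exact hk.trans (Int.le_ceil _)

end RescaledLattice

open scoped Classical in
/-- `|z|^{-p}` on the punctured unit ball of `εℤ^d`, and `0` elsewhere; thus
`kappa d ε = ε ^ d * ∑' w, radialWeight d ε d w`. -/
noncomputable def radialWeight (d : ℕ) (ε : ℝ) (p : ℕ) (w : Fin d → ℤ) : ℝ :=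
  if w ≠ 0 ∧ ‖pt d ε w‖ ≤ 1 then (‖pt d ε w‖ ^ p)⁻¹ else 0

section RadialWeight

variable {d : ℕ} {ε : ℝ}

theorem radialWeight_nonneg (p : ℕ) (w : Fin d → ℤ) : 0 ≤ radialWeight d ε p w := by
  unfold radialWeight
  split_ifs <;> positivity

theorem radialWeight_hasFiniteSupport (hε : 0 < ε) (p : ℕ) :
    (radialWeight d ε p).HasFiniteSupport :=
  (finite_setOf_norm_pt_le hε 1).subset fun w hw => by
    by_contra h
    exact hw (if_neg fun hw' => h hw'.2)

theorem radialWeight_comp (hε : ε ≠ 0) {e : (Fin d → ℤ) → Fin d → ℤ}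
    (he : ∀ w, ‖pt d ε (e w)‖ = ‖pt d ε w‖) (p : ℕ) (w : Fin d → ℤ) :
    radialWeight d ε p (e w) = radialWeight d ε p w := by
  have hzero : e w = 0 ↔ w = 0 := by
    rw [← pt_eq_zero_iff hε, ← norm_eq_zero, he, norm_eq_zero, pt_eq_zero_iff hε]
  simp only [radialWeight, he, ne_eq, hzero]

theorem radialWeight_comp_swap (hε : ε ≠ 0) (p : ℕ) (k l : Fin d) (w : Fin d → ℤ) :
    radialWeight d ε p (w ∘ Equiv.swap k l) = radialWeight d ε p w := by
  refine radialWeight_comp (e := (· ∘ Equiv.swap k l)) hε (fun w => ?_) p w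
  rw [← sq_eq_sq₀ (norm_nonneg _) (norm_nonneg _), norm_pt_sq, norm_pt_sq]
  exact Equiv.sum_comp (Equiv.swap k l) fun k => (ε * w k) ^ 2

theorem radialWeight_update_neg (hε : ε ≠ 0) (p : ℕ) (i : Fin d) (w : Fin d → ℤ) :
    radialWeight d ε p (Function.update w i (-w i)) = radialWeight d ε p w := by
  refine radialWeight_comp (e := fun w => Function.update w i (-w i)) hε (fun w => ?_) p w
  rw [← sq_eq_sq₀ (norm_nonneg _) (norm_nonneg _), norm_pt_sq, norm_pt_sq]
  refine Finset.sum_congr rfl fun k _ => ?_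
  rcases eq_or_ne k i with rfl | hk <;> simp [*]

theorem radialWeight_add_two_mul_norm_sq (hε : ε ≠ 0) (p : ℕ) (w : Fin d → ℤ) :
    radialWeight d ε (p + 2) w * ‖pt d ε w‖ ^ 2 = radialWeight d ε p w := by
  unfold radialWeight
  split_ifs with hw
  · have : ‖pt d ε w‖ ≠ 0 := by simpa [pt_eq_zero_iff hε] using hw.1
    field_simp
    ring
  · rw [zero_mul]

theorem tsum_radialWeight_pos (hε0 : 0 < ε) (hε1 : ε ≤ 1) (hd : 0 < d) (p : ℕ) :
    0 < ∑' w, radialWeight d ε p w := by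
  let i : Fin d := ⟨0, hd⟩
  refine (summable_of_hasFiniteSupport (radialWeight_hasFiniteSupport hε0 p)).tsum_pos
    (radialWeight_nonneg p) (Pi.single i (1 : ℤ)) ?_
  have hi : (Pi.single i 1 : Fin d → ℤ) ≠ 0 := by simp
  have hnorm : ‖pt d ε (Pi.single i 1)‖ = ε := by rw [norm_pt_single, abs_of_pos hε0]
  rw [radialWeight, if_pos ⟨hi, hnorm.trans_le hε1⟩, hnorm]
  positivity

end RadialWeight

open scoped Classical in
theorem lattice_sum_second_moment_general (d : ℕ) (ε : ℝ)
    (hε0 : 0 < ε) (hε1 : ε < 1) (i j : Fin d) :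
    ε ^ d / kappa d ε * ∑' w : Fin d → ℤ,
      (if w ≠ 0 ∧ ‖pt d ε w‖ ≤ 1 then
        (‖pt d ε w‖ ^ (d + 2))⁻¹ * (ε * (w i : ℝ)) * (ε * (w j : ℝ)) else 0) =
      (if i = j then 1 else 0) / d := by
  have hκ : kappa d ε = ε ^ d * ∑' w, radialWeight d ε d w := rfl
  have hκ_pos : 0 < ∑' w, radialWeight d ε d w := tsum_radialWeight_pos hε0 hε1.le i.pos d
  trans ε ^ d / kappa d ε * ∑' w, radialWeight d ε (d + 2) w * (ε * w i) * (ε * w j)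
  · simp only [radialWeight, ite_mul, zero_mul]
  split_ifs with hij
  · subst hij
    rw [tsum_mul_apply_mul_self_eq_div _ _ (radialWeight_hasFiniteSupport hε0 _)
      (radialWeight_comp_swap hε0.ne' _) i]
    simp_rw [← norm_pt_sq, radialWeight_add_two_mul_norm_sq hε0.ne', hκ]
    field_simp
  · rw [tsum_mul_apply_mul_apply_eq_zero _ _ hij (radialWeight_update_neg hε0.ne' _ i),
      mul_zero, zero_div]

open scoped Classical in
/-- for `d ≥ 1`, `ε ∈ (0,1)`, and coordinates `i, j`,
`(ε^d / κ_ε) · Σ_{z ∈ εℤ^d \ {0}, |z| ≤ 1} |z|^{-(d+2)} z_i z_j = δ_{ij} / d`. -/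
theorem lattice_sum_second_moment (d : ℕ) (hd : 1 ≤ d) (ε : ℝ)
    (hε0 : 0 < ε) (hε1 : ε < 1) (i j : Fin d) :
    ε ^ d / kappa d ε * ∑' w : Fin d → ℤ,
      (if w ≠ 0 ∧ ‖pt d ε w‖ ≤ 1 then
        (‖pt d ε w‖ ^ (d + 2))⁻¹ * (ε * (w i : ℝ)) * (ε * (w j : ℝ)) else 0) =
      (if i = j then 1 else 0) / d :=
  lattice_sum_second_moment_general d ε hε0 hε1 i j
end

section
/- Fix an integer d ≥ 1. For u, v ∈ ℤ^d with u ≠ v, let γ_{v→u} be the nearest-neighbour lattice path from v to u that changes coordinates one at a time in the order 1, …, d: first it moves the first coordinate from v_1 to u_1 by unit steps, then the second coordinate from v_2 to u_2, and so on. Then for every undirected nearest-neighbour edge e of ℤ^d and every z ∈ ℤ^d \ {0}, the number of pairs (u, v) ∈ ℤ^d × ℤ^d with v − u = z such that γ_{v→u} uses the edge e is at most |z|_1, the ℓ¹ norm of z. -/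
/-!
The endpoints of an edge `{a, b}` differ in exactly one coordinate `i`, so a canonical path can
only use it while moving coordinate `i`. At that moment the coordinates before `i` already
equal `u`'s and those after `i` still equal `v = u + z`'s, so all coordinates of `u` except the
`i`-th are pinned down by `a` and `z`. The `i`-th coordinate is then constrained by the segment
between `u i` and `u i + z i` containing the edge, which leaves exactly `|z i|` choices.
-/

/-- `pathUses v u a b` says that the canonical nearest-neighbour lattice path `γ_{v→u}`
from `v` to `u` — which changes coordinates one at a time in the order `1, …, d`, moving
each coordinate from its value in `v` to its value in `u` by unit steps — uses the
undirected edge `{a, b}`.  Indeed, while coordinate `i` is being moved, the coordinates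
`j < i` have already reached their final values `u j`, the coordinates `j > i` still have
their initial values `v j`, and the `i`-th coordinates of the two endpoints of a traversed
edge are distinct and lie between `v i` and `u i`. -/
def pathUses {d : ℕ} (v u a b : Fin d → ℤ) : Prop :=
  ∃ i : Fin d,
    (∀ j, j < i → a j = u j ∧ b j = u j) ∧
    (∀ j, i < j → a j = v j ∧ b j = v j) ∧
    a i ≠ b i ∧
    min (v i) (u i) ≤ min (a i) (b i) ∧ max (a i) (b i) ≤ max (v i) (u i)

open Finset in
theorem exists_eq_one_of_sum_natAbs_sub_eq_one {ι : Type*} [Fintype ι] [DecidableEq ι]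
    {a b : ι → ℤ} (h : ∑ i, (a i - b i).natAbs = 1) :
    ∃ i, (a i - b i).natAbs = 1 ∧ ∀ j ≠ i, a j = b j := by
  obtain ⟨i, -, hi⟩ := exists_ne_zero_of_sum_ne_zero (h.trans_ne one_ne_zero)
  have hsplit := add_sum_erase univ (fun j => (a j - b j).natAbs) (mem_univ i)
  have hrest : ∑ j ∈ univ.erase i, (a j - b j).natAbs = 0 := by omega
  refine ⟨i, by omega, fun j hj => ?_⟩
  have := (sum_eq_zero_iff.mp hrest) j (mem_erase.mpr ⟨hj, mem_univ j⟩)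
  omega

theorem pathUses.moving_coord {d : ℕ} {v u a b : Fin d → ℤ} {i : Fin d}
    (hab : ∀ j ≠ i, a j = b j) (h : pathUses v u a b) :
    (∀ j < i, u j = a j) ∧ (∀ j, i < j → v j = a j) ∧
      min (v i) (u i) ≤ min (a i) (b i) ∧ max (a i) (b i) ≤ max (v i) (u i) := by
  obtain ⟨k, hlt, hgt, hne, hmin, hmax⟩ := h
  obtain rfl : k = i := by_contra fun hk => hne (hab k hk)
  exact ⟨fun j hj => ((hlt j hj).1).symm, fun j hj => ((hgt j hj).1).symm, hmin, hmax⟩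

theorem Int.ncard_Ioc_sub_max_sub_min (m t : ℤ) :
    (Set.Ioc (m - max t 0) (m - min t 0)).ncard = t.natAbs := by
  rw [← Finset.coe_Ioc, Set.ncard_coe_finset, Int.card_Ioc]
  omega

theorem path_counting_general (d : ℕ) (a b : Fin d → ℤ)
    (he : ∑ i : Fin d, (a i - b i).natAbs = 1) (z : Fin d → ℤ) :
    {u : Fin d → ℤ | pathUses (u + z) u a b}.Finite ∧
    {u : Fin d → ℤ | pathUses (u + z) u a b}.ncard ≤ ∑ i : Fin d, (z i).natAbs := by
  obtain ⟨i, hi, hab⟩ := exists_eq_one_of_sum_natAbs_sub_eq_one he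
  set m := min (a i) (b i)
  set I := Set.Ioc (m - max (z i) 0) (m - min (z i) 0)
  let target : ℤ → Fin d → ℤ :=
    fun x => Function.update (fun j => if j < i then a j else a j - z j) i x
  have hsub : {u | pathUses (u + z) u a b} ⊆ target '' I := by
    intro u hu
    obtain ⟨hlt, hgt, hmin, hmax⟩ := hu.moving_coord hab
    simp only [Pi.add_apply] at hgt hmin hmax
    refine ⟨u i, ?_, funext fun j => ?_⟩
    · constructor <;> omega
    · rcases lt_trichotomy j i with hj | rfl | hj
      · simp [target, hj.ne, hj, hlt j hj]
      · simp [target]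
      · have := hgt j hj
        simp only [target, Function.update_of_ne hj.ne', if_neg hj.not_gt]
        omega
  have hI : I.Finite := Set.finite_Ioc _ _
  refine ⟨(hI.image target).subset hsub, ?_⟩
  calc {u | pathUses (u + z) u a b}.ncard
      ≤ (target '' I).ncard := Set.ncard_le_ncard hsub (hI.image target)
    _ ≤ I.ncard := Set.ncard_image_le hI
    _ = (z i).natAbs := Int.ncard_Ioc_sub_max_sub_min m (z i)
    _ ≤ ∑ j, (z j).natAbs :=
      Finset.single_le_sum (f := fun j => (z j).natAbs) (fun _ _ => Nat.zero_le _)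
        (Finset.mem_univ i)

/-- for every undirected nearest-neighbour edge `e = {a, b}` of `ℤ^d`
(`|a − b|₁ = 1`) and every `z ∈ ℤ^d \ {0}`, the number of pairs `(u, v)` with `v − u = z`
such that the canonical path `γ_{v→u}` uses `e` is at most `|z|₁`. -/
theorem path_counting (d : ℕ) (hd : 1 ≤ d) (a b : Fin d → ℤ)
    (he : ∑ i : Fin d, (a i - b i).natAbs = 1) (z : Fin d → ℤ) (hz : z ≠ 0) :
    {u : Fin d → ℤ | pathUses (u + z) u a b}.Finite ∧
    {u : Fin d → ℤ | pathUses (u + z) u a b}.ncard ≤ ∑ i : Fin d, (z i).natAbs :=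
  path_counting_general d a b he z
end

section
/- Let d ≥ 1 be an integer. There exists a constant C = C(d) < ∞ such that for every bounded open set U ⊂ ℝ^d, every ε ∈ (0,1), every integer k ≥ 0 with ε·3^k ≤ diam(U), and every function h : εℤ^d → ℝ with h(x) = 0 for all x ∈ εℤ^d \ U, one has ε^d · Σ_{x ∈ εℤ^d} h(x)² ≤ C · diam(U)² · ε^{2d} · Σ_{x ∈ εℤ^d} Σ_{z ∈ εℤ^d, ε·3^k ≤ ‖z‖_∞ < ε·3^{k+1}} |z|^{-(d+2)} (h(x+z) − h(x))². -/
/-- The rescaled lattice point `ε·w` viewed in `ℝ^d` with the supremum norm `‖·‖_∞`. -/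
noncomputable def ptSup (d : ℕ) (ε : ℝ) (w : Fin d → ℤ) : Fin d → ℝ :=
  fun i => ε * (w i : ℝ)

open Function Finset

section Chain

variable {G : Type*} [AddCommGroup G]

lemma Function.HasFiniteSupport.summable_sq_sub_translate {h : G → ℝ} (hh : h.HasFiniteSupport)
    (a b : G) : Summable fun x => (h (x + a) - h (x + b)) ^ 2 := by
  have hab := (hh.comp_of_injective (add_left_injective a)).sub
    (hh.comp_of_injective (add_left_injective b))
  exact (summable_of_hasFiniteSupport (hab.mul_left fun x => h (x + a) - h (x + b))).congr
    fun x => by simp [sq]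

lemma Function.HasFiniteSupport.summable_mul_sq_sub {c h : G → ℝ} (hc : c.HasFiniteSupport)
    (hh : h.HasFiniteSupport) :
    Summable fun q : G × G => c q.2 * (h (q.1 + q.2) - h q.1) ^ 2 := by
  have hshear : Injective fun q : G × G => (q.1 + q.2, q.2) := fun p q hpq => by
    simp only [Prod.mk.injEq] at hpq
    exact Prod.ext (add_right_cancel (hpq.2 ▸ hpq.1)) hpq.2
  have hfin := ((hh.prod hc).preimage hshear.injOn).union (hh.prod hc)
  refine summable_of_hasFiniteSupport (hfin.subset fun q hq => ?_)
  rw [mem_support, mul_ne_zero_iff] at hq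
  by_cases hq1 : h q.1 = 0
  · exact Or.inl ⟨fun h0 => hq.2 (by simp [h0, hq1]), hq.1⟩
  · exact Or.inr ⟨hq1, hq.1⟩

lemma sq_le_mul_sum_sq_sub_of_eq_zero (h : G → ℝ) (w z : G) (M : ℕ) (hM : h (w + M • z) = 0) :
    h w ^ 2 ≤ M * ∑ m ∈ range M, (h (w + (m + 1) • z) - h (w + m • z)) ^ 2 := by
  have htel : ∑ m ∈ range M, (h (w + (m + 1) • z) - h (w + m • z)) = -h w := by
    rw [sum_range_sub (fun m => h (w + m • z)), hM]
    simp
  simpa [htel] using sq_sum_le_card_mul_sum_sq (s := range M)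
    (f := fun m => h (w + (m + 1) • z) - h (w + m • z))

theorem tsum_sq_le_sq_mul_tsum_sq_sub {h : G → ℝ} (hh : h.HasFiniteSupport) {z : G} {M : ℕ}
    (hesc : ∀ w, h w ≠ 0 → h (w + M • z) = 0) :
    ∑' w, h w ^ 2 ≤ M ^ 2 * ∑' x, (h (x + z) - h x) ^ 2 := by
  have hsum (m : ℕ) := hh.summable_sq_sub_translate ((m + 1) • z) (m • z)
  have hshift (m : ℕ) : ∑' w, (h (w + (m + 1) • z) - h (w + m • z)) ^ 2 =
      ∑' x, (h (x + z) - h x) ^ 2 := by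
    refine Eq.trans ?_ ((Equiv.addRight (m • z)).tsum_eq fun x => (h (x + z) - h x) ^ 2)
    simp only [Equiv.coe_addRight, succ_nsmul, add_assoc]
  calc ∑' w, h w ^ 2
      ≤ ∑' w, (M : ℝ) * ∑ m ∈ range M, (h (w + (m + 1) • z) - h (w + m • z)) ^ 2 := by
        refine Summable.tsum_le_tsum (fun w => ?_)
          ((summable_of_hasFiniteSupport (hh.mul_left h)).congr fun x => by simp [sq])
          ((summable_sum fun m _ => hsum m).mul_left _)
        by_cases hw : h w = 0
        · rw [hw, sq, mul_zero]
          positivity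
        · exact sq_le_mul_sum_sq_sub_of_eq_zero h w z M (hesc w hw)
    _ = M ^ 2 * ∑' x, (h (x + z) - h x) ^ 2 := by
        rw [tsum_mul_left, Summable.tsum_finsetSum fun m _ => hsum m,
          sum_congr rfl fun m _ => hshift m, sum_const, card_range, nsmul_eq_mul]
        ring

lemma sum_mul_tsum_sq_sub_le_tsum {c h : G → ℝ} (hc : c.HasFiniteSupport) (hc0 : 0 ≤ c)
    (hh : h.HasFiniteSupport) (S : Finset G) :
    ∑ z ∈ S, c z * ∑' x, (h (x + z) - h x) ^ 2 ≤
      ∑' q : G × G, c q.2 * (h (q.1 + q.2) - h q.1) ^ 2 := by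
  have hF := hc.summable_mul_sq_sub hh
  rw [hF.tsum_prod, ← Summable.tsum_comm (f := fun x z => c z * (h (x + z) - h x) ^ 2) hF]
  simp only [tsum_mul_left]
  refine Summable.sum_le_tsum S
    (fun z _ => mul_nonneg (hc0 z) (tsum_nonneg fun _ => sq_nonneg _)) ?_
  simpa only [Prod.swap, tsum_mul_left] using hF.prod_symm.prod

end Chain

lemma exists_nat_lt_mul_le_two_mul {a R : ℝ} (ha : 0 < a) (haR : a ≤ R) :
    ∃ M : ℕ, R < M * a ∧ M * a ≤ 2 * R := by
  refine ⟨⌊R / a⌋₊ + 1, ?_, ?_⟩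
  · rw [← div_lt_iff₀ ha]
    exact_mod_cast Nat.lt_floor_add_one (R / a)
  · have := Nat.floor_le (div_nonneg (ha.le.trans haR) ha.le)
    rw [le_div_iff₀ ha] at this
    push_cast
    linarith

section Lattice

variable {d : ℕ} {ε : ℝ}

lemma norm_ptSup (d : ℕ) (ε : ℝ) (w : Fin d → ℤ) : ‖ptSup d ε w‖ = |ε| * ‖w‖ := by
  have : ptSup d ε w = ε • fun i => (w i : ℝ) := rfl
  rw [this, norm_smul, Real.norm_eq_abs]
  -- the norm of `n : ℤ` is by definition that of `(n : ℝ)`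
  rfl

lemma norm_ptSup_le_norm_pt (d : ℕ) (ε : ℝ) (w : Fin d → ℤ) : ‖ptSup d ε w‖ ≤ ‖pt d ε w‖ := by
  have := (PiLp.lipschitzWith_ofLp 2 (fun _ : Fin d => ℝ)).norm_le_mul (by simp) (pt d ε w)
  rwa [NNReal.coe_one, one_mul] at this

lemma norm_pt_le_sqrt_mul_norm_ptSup (d : ℕ) (ε : ℝ) (w : Fin d → ℤ) :
    ‖pt d ε w‖ ≤ √d * ‖ptSup d ε w‖ := by
  have := (PiLp.lipschitzWith_toLp 2 (fun _ : Fin d => ℝ)).norm_le_mul (by simp) (ptSup d ε w)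
  exact this.trans_eq (by simp [Real.sqrt_eq_rpow])

lemma dist_pt_add_nsmul (d : ℕ) (ε : ℝ) (w z : Fin d → ℤ) (M : ℕ) :
    dist (pt d ε (w + M • z)) (pt d ε w) = M * ‖pt d ε z‖ := by
  have : pt d ε (w + M • z) = pt d ε w + M • pt d ε z := by
    ext i
    simp [pt]
    ring
  rw [this, dist_eq_norm, add_sub_cancel_left, RCLike.norm_nsmul ℝ, nsmul_eq_mul]

lemma finite_setOf_norm_ptSup_le (hε : 0 < ε) (r : ℝ) : {w | ‖ptSup d ε w‖ ≤ r}.Finite := by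
  refine ((isCompact_closedBall (0 : Fin d → ℤ) (r / ε)).finite_of_discrete).subset fun w hw => ?_
  rw [Set.mem_ofPred_eq, norm_ptSup, abs_of_pos hε] at hw
  rw [mem_closedBall_zero_iff, le_div_iff₀ hε]
  linarith

lemma hasFiniteSupport_of_eq_zero_of_pt_notMem {U : Set (EuclideanSpace ℝ (Fin d))}
    (hU : Bornology.IsBounded U) (hε : 0 < ε) {h : (Fin d → ℤ) → ℝ}
    (hh : ∀ w, pt d ε w ∉ U → h w = 0) : h.HasFiniteSupport := by
  obtain ⟨r, hr⟩ := hU.subset_closedBall 0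
  refine (finite_setOf_norm_ptSup_le hε r).subset fun w hw => ?_
  have hwU : pt d ε w ∈ U := not_imp_comm.1 (hh w) hw
  exact (norm_ptSup_le_norm_pt d ε w).trans (mem_closedBall_zero_iff.1 (hr hwU))

end Lattice

noncomputable def shellCube (d k : ℕ) : Finset (Fin d → ℤ) :=
  Fintype.piFinset fun _ => Ico ((3 : ℤ) ^ k) (2 * 3 ^ k)

lemma card_shellCube (d k : ℕ) : #(shellCube d k) = (3 ^ k) ^ d := by
  simp [shellCube, Int.card_Ico, two_mul, Int.toNat_pow_of_nonneg]

lemma norm_mem_Ico_of_mem_shellCube {d k : ℕ} (hd : 1 ≤ d) {z : Fin d → ℤ}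
    (hz : z ∈ shellCube d k) : 3 ^ k ≤ ‖z‖ ∧ ‖z‖ < 3 ^ (k + 1) := by
  simp only [shellCube, Fintype.mem_piFinset, mem_Ico] at hz
  have hcoord (i : Fin d) : (3 : ℝ) ^ k ≤ ‖z i‖ ∧ ‖z i‖ < 3 ^ (k + 1) := by
    obtain ⟨h1, h2⟩ := hz i
    have h0 : (0 : ℤ) ≤ z i := le_trans (by positivity) h1
    rw [Int.norm_eq_abs, abs_of_nonneg (by exact_mod_cast h0), pow_succ]
    constructor
    · exact_mod_cast h1
    · have : ((z i : ℤ) : ℝ) < 2 * 3 ^ k := by exact_mod_cast h2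
      linarith [pow_pos (three_pos : (0 : ℝ) < 3) k]
  exact ⟨(hcoord ⟨0, hd⟩).1.trans (norm_le_pi_norm z _),
    (pi_norm_lt_iff (by positivity)).2 fun i => (hcoord i).2⟩

open scoped Classical in
noncomputable def shellWeight (d : ℕ) (ε : ℝ) (k : ℕ) (z : Fin d → ℤ) : ℝ :=
  if ε * 3 ^ k ≤ ‖ptSup d ε z‖ ∧ ‖ptSup d ε z‖ < ε * 3 ^ (k + 1) then
    (‖pt d ε z‖ ^ (d + 2))⁻¹ else 0

section Shell

variable {d k : ℕ} {ε : ℝ}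

lemma shellWeight_nonneg : 0 ≤ shellWeight d ε k := fun z => by
  unfold shellWeight
  split_ifs <;> positivity

lemma hasFiniteSupport_shellWeight (hε : 0 < ε) : (shellWeight d ε k).HasFiniteSupport := by
  refine (finite_setOf_norm_ptSup_le hε (ε * 3 ^ (k + 1))).subset fun z hz => ?_
  rw [mem_support, shellWeight] at hz
  split_ifs at hz with hshell
  · exact hshell.2.le
  · exact absurd rfl hz

lemma norm_ptSup_mem_shell_of_mem_shellCube (hd : 1 ≤ d) (hε : 0 < ε) {z : Fin d → ℤ}
    (hz : z ∈ shellCube d k) :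
    ε * 3 ^ k ≤ ‖ptSup d ε z‖ ∧ ‖ptSup d ε z‖ < ε * 3 ^ (k + 1) := by
  obtain ⟨hlow, hup⟩ := norm_mem_Ico_of_mem_shellCube hd hz
  rw [norm_ptSup, abs_of_pos hε]
  exact ⟨mul_le_mul_of_nonneg_left hlow hε.le, mul_lt_mul_of_pos_left hup hε⟩

lemma le_norm_pt_of_mem_shellCube (hd : 1 ≤ d) (hε : 0 < ε) {z : Fin d → ℤ}
    (hz : z ∈ shellCube d k) : ε * 3 ^ k ≤ ‖pt d ε z‖ :=
  (norm_ptSup_mem_shell_of_mem_shellCube hd hε hz).1.trans (norm_ptSup_le_norm_pt d ε z)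

lemma inv_le_shellWeight_of_mem_shellCube (hd : 1 ≤ d) (hε : 0 < ε) {z : Fin d → ℤ}
    (hz : z ∈ shellCube d k) :
    ((√d * (ε * 3 ^ (k + 1))) ^ (d + 2))⁻¹ ≤ shellWeight d ε k z := by
  have hshell := norm_ptSup_mem_shell_of_mem_shellCube hd hε hz
  have hpos : 0 < ‖pt d ε z‖ := (by positivity : (0 : ℝ) < ε * 3 ^ k).trans_le
    (le_norm_pt_of_mem_shellCube hd hε hz)
  rw [shellWeight, if_pos hshell]
  gcongr
  exact (norm_pt_le_sqrt_mul_norm_ptSup d ε z).trans (by gcongr; exact hshell.2.le)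

lemma card_mul_le_tsum_shellWeight_mul_sq_sub (hd : 1 ≤ d) (hε : 0 < ε)
    {h : (Fin d → ℤ) → ℝ} (hh : h.HasFiniteSupport) {B : ℝ}
    (hB : ∀ z ∈ shellCube d k, B ≤ ∑' x, (h (x + z) - h x) ^ 2) :
    (3 ^ k) ^ d * (((√d * (ε * 3 ^ (k + 1))) ^ (d + 2))⁻¹ * B) ≤
      ∑' q : (Fin d → ℤ) × (Fin d → ℤ), shellWeight d ε k q.2 * (h (q.1 + q.2) - h q.1) ^ 2 :=
  calc (3 ^ k) ^ d * (((√d * (ε * 3 ^ (k + 1))) ^ (d + 2))⁻¹ * B)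
      = ∑ _z ∈ shellCube d k, ((√d * (ε * 3 ^ (k + 1))) ^ (d + 2))⁻¹ * B := by
        rw [sum_const, card_shellCube, nsmul_eq_mul]
        push_cast
        ring
    _ ≤ ∑ z ∈ shellCube d k, shellWeight d ε k z * ∑' x, (h (x + z) - h x) ^ 2 :=
        sum_le_sum fun z hz => mul_le_mul_of_nonneg (inv_le_shellWeight_of_mem_shellCube hd hε hz)
          (hB z hz) (by positivity) (tsum_nonneg fun _ => sq_nonneg _)
    _ ≤ _ := sum_mul_tsum_sq_sub_le_tsum (hasFiniteSupport_shellWeight hε) shellWeight_nonneg hh _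

end Shell

open scoped Classical in
/-- single-scale estimate: for `d ≥ 1` there is `C = C(d)` such that for
every bounded open `U ⊂ ℝ^d`, every `ε ∈ (0,1)`, every integer `k ≥ 0` with
`ε·3^k ≤ diam U`, and every `h : εℤ^d → ℝ` vanishing on `εℤ^d \ U`,
`ε^d Σ_x h(x)² ≤ C diam(U)² ε^{2d} Σ_x Σ_{ε3^k ≤ ‖z‖_∞ < ε3^{k+1}} |z|^{-(d+2)} (h(x+z) − h(x))²`. -/
theorem single_scale_estimate (d : ℕ) (hd : 1 ≤ d) :
    ∃ C : ℝ, ∀ U : Set (EuclideanSpace ℝ (Fin d)),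
      IsOpen U → Bornology.IsBounded U →
      ∀ ε : ℝ, 0 < ε → ε < 1 →
      ∀ k : ℕ, ε * 3 ^ k ≤ Metric.diam U →
      ∀ h : (Fin d → ℤ) → ℝ, (∀ w, pt d ε w ∉ U → h w = 0) →
      ε ^ d * ∑' w : Fin d → ℤ, (h w) ^ 2 ≤
        C * Metric.diam U ^ 2 * ε ^ (2 * d) *
          ∑' q : (Fin d → ℤ) × (Fin d → ℤ),
            (if ε * 3 ^ k ≤ ‖ptSup d ε q.2‖ ∧ ‖ptSup d ε q.2‖ < ε * 3 ^ (k + 1) then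
              (‖pt d ε q.2‖ ^ (d + 2))⁻¹ * (h (q.1 + q.2) - h q.1) ^ 2 else 0) := by
  refine ⟨4 * (3 * √d) ^ (d + 2), fun U _ hU ε hε _ k hk h hh => ?_⟩
  set R := Metric.diam U
  set H := ∑' w, h w ^ 2
  have ha : 0 < ε * 3 ^ k := by positivity
  obtain ⟨M, hRM, hMR⟩ := exists_nat_lt_mul_le_two_mul ha hk
  have hfin := hasFiniteSupport_of_eq_zero_of_pt_notMem hU hε hh
  have hchain (z) (hz : z ∈ shellCube d k) : H / M ^ 2 ≤ ∑' x, (h (x + z) - h x) ^ 2 := by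
    refine div_le_of_le_mul₀ (by positivity) (by positivity) ?_
    rw [mul_comm]
    refine tsum_sq_le_sq_mul_tsum_sq_sub hfin fun w hw => hh _ fun hwU => ?_
    have hdist := Metric.dist_le_diam_of_mem hU hwU (not_imp_comm.1 (hh w) hw)
    rw [dist_pt_add_nsmul] at hdist
    nlinarith [le_norm_pt_of_mem_shellCube hd hε hz]
  have hT := card_mul_le_tsum_shellWeight_mul_sq_sub hd hε hfin hchain
  simp only [shellWeight, ite_mul, zero_mul] at hT
  have hR : 0 < R := ha.trans_le hk
  have hM : 0 < (M : ℝ) * (ε * 3 ^ k) := hR.trans hRM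
  calc ε ^ d * H ≤ ε ^ d * ((2 * R) ^ 2 / (M * (ε * 3 ^ k)) ^ 2 * H) := by
        gcongr
        refine le_mul_of_one_le_left (by positivity) ((one_le_div (by positivity)).2 ?_)
        gcongr
    _ = 4 * (3 * √d) ^ (d + 2) * R ^ 2 * ε ^ (2 * d) *
          ((3 ^ k) ^ d * (((√d * (ε * 3 ^ (k + 1))) ^ (d + 2))⁻¹ * (H / M ^ 2))) := by
        field_simp
        ring
    _ ≤ _ := by gcongr
end

section
/- Let d ≥ 1 be an integer, λ ∈ (0,1], ε ∈ (0,1), p ∈ ℝ^d, and let U ⊂ ℝ^d be bounded; write U^ε := U ∩ εℤ^d. Let a : εℤ^d × εℤ^d → ℝ be symmetric with λ ≤ a ≤ λ^{-1}, and write J(z) := |z|^{-(d+2)} for z ≠ 0. Let g : εℤ^d × εℤ^d → ℝ be antisymmetric (g(x,y) = −g(y,x)) and divergence free on U^ε, meaning that for every x ∈ U^ε the sum Σ_{z ∈ εℤ^d \ {0}} g(x+z, x) converges absolutely and equals 0. Then for every w : εℤ^d → ℝ with w = 0 on εℤ^d \ U^ε, (1/2) Σ_{x, z ∈ εℤ^d,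 z ≠ 0, (x ∈ U^ε or x+z ∈ U^ε)} a(x, x+z) J(z) [ (p·z + w(x+z) − w(x))² − (p·z)² ] ≥ − (1/2) Σ_{x, z ∈ εℤ^d, z ≠ 0, (x ∈ U^ε or x+z ∈ U^ε)} (a(x, x+z) J(z))^{-1} ( g(x+z, x) − a(x, x+z) J(z) (p·z) )², where the right-hand side is allowed to be −∞, in which case the inequality is trivial. -/
open Filter

lemma tendsto_pt_cofinite_cocompact {d : ℕ} {ε : ℝ} (hε : ε ≠ 0) :
    Tendsto (pt d ε) cofinite (cocompact _) := by
  have hcast : Tendsto (fun z : Fin d → ℤ => fun i => (z i : ℝ)) cofinite (cocompact _) := by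
    have := Tendsto.pi_map_coprodᵢ (ι := Fin d) fun _ => Int.tendsto_coe_cofinite
    rwa [coprodᵢ_cofinite, coprodᵢ_cocompact] at this
  let e := (Homeomorph.smulOfNeZero ε hε).trans (PiLp.homeomorph 2 fun _ : Fin d => ℝ).symm
  exact e.isClosedEmbedding.tendsto_cocompact.comp hcast

lemma finite_setOf_pt_mem {d : ℕ} {ε : ℝ} (hε : ε ≠ 0) {U : Set (EuclideanSpace ℝ (Fin d))}
    (hU : Bornology.IsBounded U) : {x | pt d ε x ∈ U}.Finite :=
  (mem_cofinite.1 <|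
      tendsto_pt_cofinite_cocompact hε hU.isCompact_closure.compl_mem_cocompact).subset
    fun _ hx => by simpa using subset_closure (s := U) hx

lemma pt_ne_zero {d : ℕ} {ε : ℝ} (hε : ε ≠ 0) {z : Fin d → ℤ} (hz : z ≠ 0) : pt d ε z ≠ 0 := by
  contrapose! hz
  funext i
  simpa [pt, hε] using congrArg (· i) hz

lemma hasSum_of_fst_mem_finset {β γ M : Type*} [AddCommMonoid M] [TopologicalSpace M]
    [ContinuousAdd M] {f : β × γ → M} {s : Finset β} {a : β → M}
    (hf : ∀ q, q.1 ∉ s → f q = 0) (ha : ∀ b ∈ s, HasSum (fun c => f (b, c)) (a b)) :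
    HasSum f (∑ b ∈ s, a b) := by
  classical
  have hfib : ∀ b ∈ s, HasSum (fun q : β × γ => if q.1 = b then f q else 0) (a b) :=
    fun b hb => ((Prod.mk_right_injective b).hasSum_iff fun q hq => if_neg fun h =>
      hq ⟨q.2, Prod.ext h.symm rfl⟩).1 (by simpa [Function.comp_def] using ha b hb)
  convert hasSum_sum hfib with q
  by_cases hq : q.1 ∈ s
  · simp [hq]
  · simp [hf q hq]

lemma two_mul_sub_le_of_young {A G P u v : ℝ} (hA : 0 < A) :
    2 * (G * (v - u)) - A⁻¹ * (G - A * P) ^ 2 ≤ A * ((P + v - u) ^ 2 - P ^ 2) := by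
  have key : A * ((P + v - u) ^ 2 - P ^ 2) - (2 * (G * (v - u)) - A⁻¹ * (G - A * P) ^ 2)
      = (A * (v - u) - (G - A * P)) ^ 2 / A := by
    field_simp
    ring
  linarith [div_nonneg (sq_nonneg (A * (v - u) - (G - A * P))) hA.le]

lemma ofReal_neg_half_tsum_le {ι : Type*} {L T G : ι → ℝ} (hG : HasSum G 0)
    (hle : ∀ i, 2 * G i - T i ≤ L i) :
    ENNReal.ofReal (-(2⁻¹ * ∑' i, L i)) ≤ 2⁻¹ * ∑' i, ENNReal.ofReal (T i) := by
  by_cases hL : Summable L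
  swap
  -- junk value: a non-summable `L` has `∑' i, L i = 0`
  · simp [tsum_eq_zero_of_not_summable hL]
  by_cases hT : ∑' i, ENNReal.ofReal (T i) = ⊤
  · simp [hT]
  have hT' : HasSum (fun i => (ENNReal.ofReal (T i)).toReal)
      (∑' i, ENNReal.ofReal (T i)).toReal := by
    rw [ENNReal.tsum_toReal_eq (by simp)]
    exact (ENNReal.summable_toReal hT).hasSum
  have : -(∑' i, ENNReal.ofReal (T i)).toReal ≤ ∑' i, L i := by
    refine hasSum_le (fun i => ?_) (by simpa using (hG.mul_left 2).sub hT') hL.hasSum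
    rw [ENNReal.toReal_ofReal']
    linarith [hle i, le_max_left (T i) 0]
  rw [ENNReal.ofReal_le_iff_le_toReal (by finiteness), ENNReal.toReal_mul]
  simp only [ENNReal.toReal_inv, ENNReal.toReal_ofNat]
  linarith

section Flux

open scoped Classical

variable {α : Type*} [AddCommGroup α] [DecidableEq α] {g : α → α → ℝ} {w : α → ℝ} {S : Set α}

lemma hasSum_flux_mul_eq_zero (hS : S.Finite)
    (hdiv : ∀ x ∈ S, HasSum (fun z => if z ≠ 0 then g (x + z) x else 0) 0)
    (hw : ∀ x ∉ S, w x = 0) :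
    HasSum (fun q : α × α =>
      if q.2 ≠ 0 ∧ (q.1 ∈ S ∨ q.1 + q.2 ∈ S) then g (q.1 + q.2) q.1 * w q.1 else 0) 0 := by
  simpa using hasSum_of_fst_mem_finset (s := hS.toFinset) (a := fun _ => 0)
    (f := fun q : α × α =>
      if q.2 ≠ 0 ∧ (q.1 ∈ S ∨ q.1 + q.2 ∈ S) then g (q.1 + q.2) q.1 * w q.1 else 0)
    (fun q hq => by simp [hw q.1 (by simpa using hq)])
    fun x hx => by
      have hx : x ∈ S := hS.mem_toFinset.1 hx
      simpa [hx, ite_not] using (hdiv x hx).mul_right (w x)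

lemma hasSum_flux_mul_grad_eq_zero (hS : S.Finite) (hanti : ∀ x y, g x y = -g y x)
    (hdiv : ∀ x ∈ S, HasSum (fun z => if z ≠ 0 then g (x + z) x else 0) 0)
    (hw : ∀ x ∉ S, w x = 0) :
    HasSum (fun q : α × α => if q.2 ≠ 0 ∧ (q.1 ∈ S ∨ q.1 + q.2 ∈ S) then
      g (q.1 + q.2) q.1 * (w (q.1 + q.2) - w q.1) else 0) 0 := by
  have h₀ := hasSum_flux_mul_eq_zero hS hdiv hw
  let r : α × α ≃ α × α :=
    ⟨fun q => (q.1 + q.2, -q.2), fun q => (q.1 + q.2, -q.2), fun q => by simp, fun q => by simp⟩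
  -- reversing the edge `(x, z) ↦ (x + z, -z)` and antisymmetry of `g`
  have h₁ : HasSum (fun q : α × α => if q.2 ≠ 0 ∧ (q.1 ∈ S ∨ q.1 + q.2 ∈ S) then
      g (q.1 + q.2) q.1 * w (q.1 + q.2) else 0) 0 := by
    rw [← r.hasSum_iff]
    refine (neg_zero (G := ℝ) ▸ h₀.neg).congr_fun fun q => ?_
    by_cases h : q.2 ≠ 0 ∧ (q.1 ∈ S ∨ q.1 + q.2 ∈ S) <;> simp [r, h, or_comm, hanti q.1]
  simpa [mul_sub, ite_sub_ite] using h₁.sub h₀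

end Flux

open scoped Classical in
theorem young_solenoidal_bound_general (d : ℕ) (lam : ℝ) (hlam0 : 0 < lam)
    (ε : ℝ) (hε0 : 0 < ε)
    (p : EuclideanSpace ℝ (Fin d))
    (U : Set (EuclideanSpace ℝ (Fin d))) (hU : Bornology.IsBounded U)
    (a : (Fin d → ℤ) → (Fin d → ℤ) → ℝ)
    (hbd : ∀ x y, lam ≤ a x y ∧ a x y ≤ lam⁻¹)
    (g : (Fin d → ℤ) → (Fin d → ℤ) → ℝ)
    (hanti : ∀ x y, g x y = - g y x)
    (hdivSummable : ∀ x, pt d ε x ∈ U →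
      Summable (fun z : Fin d → ℤ => if z ≠ 0 then g (x + z) x else 0))
    (hdivFree : ∀ x, pt d ε x ∈ U →
      ∑' z : Fin d → ℤ, (if z ≠ 0 then g (x + z) x else 0) = 0)
    (w : (Fin d → ℤ) → ℝ) (hw : ∀ x, pt d ε x ∉ U → w x = 0) :
    ENNReal.ofReal
      (-(2⁻¹ * ∑' q : (Fin d → ℤ) × (Fin d → ℤ),
        (if q.2 ≠ 0 ∧ (pt d ε q.1 ∈ U ∨ pt d ε (q.1 + q.2) ∈ U) then
          a q.1 (q.1 + q.2) * (‖pt d ε q.2‖ ^ (d + 2))⁻¹ *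
            (((∑ i, p i * (ε * (q.2 i : ℝ))) + w (q.1 + q.2) - w q.1) ^ 2 -
              (∑ i, p i * (ε * (q.2 i : ℝ))) ^ 2)
        else 0))) ≤
    2⁻¹ * ∑' q : (Fin d → ℤ) × (Fin d → ℤ),
      ENNReal.ofReal
        (if q.2 ≠ 0 ∧ (pt d ε q.1 ∈ U ∨ pt d ε (q.1 + q.2) ∈ U) then
          (a q.1 (q.1 + q.2) * (‖pt d ε q.2‖ ^ (d + 2))⁻¹)⁻¹ *
            (g (q.1 + q.2) q.1 -
              a q.1 (q.1 + q.2) * (‖pt d ε q.2‖ ^ (d + 2))⁻¹ *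
                (∑ i, p i * (ε * (q.2 i : ℝ)))) ^ 2
        else 0) := by
  have hS : {x | pt d ε x ∈ U}.Finite := finite_setOf_pt_mem hε0.ne' hU
  have hflux := hasSum_flux_mul_grad_eq_zero hS hanti
    (fun x hx => (hdivSummable x hx).hasSum_iff.2 (hdivFree x hx)) hw
  simp only [Set.mem_ofPred_eq] at hflux
  refine ofReal_neg_half_tsum_le hflux fun q => ?_
  split_ifs with hq
  · have hJ : 0 < (‖pt d ε q.2‖ ^ (d + 2))⁻¹ := by
      have := pt_ne_zero hε0.ne' hq.1
      positivity
    exact two_mul_sub_le_of_young (mul_pos (hlam0.trans_le (hbd _ _).1) hJ)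
  · simp

open scoped Classical in
/-- Young-inequality lower bound via a solenoidal field: with
`J(z) = |z|^{-(d+2)}`, if `g` is antisymmetric and divergence free on `U^ε`, then for
every `w` vanishing outside `U^ε`,
`(1/2) Σ_{x,z≠0, x ∈ U^ε or x+z ∈ U^ε} a(x,x+z) J(z) [(p·z + w(x+z) − w(x))² − (p·z)²]
  ≥ −(1/2) Σ (a(x,x+z) J(z))^{-1} (g(x+z,x) − a(x,x+z) J(z) (p·z))²`,
the right-hand side being interpreted in `[0,∞]` (so the inequality is trivial if it is
infinite).  Lattice points are indexed by integer vectors (`x = ε·w`). -/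
theorem young_solenoidal_bound (d : ℕ) (hd : 1 ≤ d) (lam : ℝ) (hlam0 : 0 < lam)
    (hlam1 : lam ≤ 1) (ε : ℝ) (hε0 : 0 < ε) (hε1 : ε < 1)
    (p : EuclideanSpace ℝ (Fin d))
    (U : Set (EuclideanSpace ℝ (Fin d))) (hU : Bornology.IsBounded U)
    (a : (Fin d → ℤ) → (Fin d → ℤ) → ℝ)
    (hsymm : ∀ x y, a x y = a y x)
    (hbd : ∀ x y, lam ≤ a x y ∧ a x y ≤ lam⁻¹)
    (g : (Fin d → ℤ) → (Fin d → ℤ) → ℝ)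
    (hanti : ∀ x y, g x y = - g y x)
    (hdivSummable : ∀ x, pt d ε x ∈ U →
      Summable (fun z : Fin d → ℤ => if z ≠ 0 then g (x + z) x else 0))
    (hdivFree : ∀ x, pt d ε x ∈ U →
      ∑' z : Fin d → ℤ, (if z ≠ 0 then g (x + z) x else 0) = 0)
    (w : (Fin d → ℤ) → ℝ) (hw : ∀ x, pt d ε x ∉ U → w x = 0) :
    ENNReal.ofReal
      (-(2⁻¹ * ∑' q : (Fin d → ℤ) × (Fin d → ℤ),
        (if q.2 ≠ 0 ∧ (pt d ε q.1 ∈ U ∨ pt d ε (q.1 + q.2) ∈ U) then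
          a q.1 (q.1 + q.2) * (‖pt d ε q.2‖ ^ (d + 2))⁻¹ *
            (((∑ i, p i * (ε * (q.2 i : ℝ))) + w (q.1 + q.2) - w q.1) ^ 2 -
              (∑ i, p i * (ε * (q.2 i : ℝ))) ^ 2)
        else 0))) ≤
    2⁻¹ * ∑' q : (Fin d → ℤ) × (Fin d → ℤ),
      ENNReal.ofReal
        (if q.2 ≠ 0 ∧ (pt d ε q.1 ∈ U ∨ pt d ε (q.1 + q.2) ∈ U) then
          (a q.1 (q.1 + q.2) * (‖pt d ε q.2‖ ^ (d + 2))⁻¹)⁻¹ *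
            (g (q.1 + q.2) q.1 -
              a q.1 (q.1 + q.2) * (‖pt d ε q.2‖ ^ (d + 2))⁻¹ *
                (∑ i, p i * (ε * (q.2 i : ℝ)))) ^ 2
        else 0) :=
  young_solenoidal_bound_general d lam hlam0 ε hε0 p U hU a hbd g hanti hdivSummable hdivFree w hw
end
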